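/- A perm algebra E factorizes through two given perm subalgebras A and V (i.e., E = A + V and A ∩ V = {0}) if and only if there exists a matched pair of perm algebras (A, V, ⇀, ↼, ⊳, ⊲) such that E is isomorphic to the bicrossed product A ⋈ V. -/

import Mathlib

/-- The multiplication of a perm subalgebra, restricted to the subtype. -/
def subMul {k E : Type*} [Field k] [AddCommGroup E] [Module k E]
    (mul : E →ₗ[k] E →ₗ[k] E) (A : Submodule k E)
    (hA : ∀ a ∈ A, ∀ b ∈ A, mul a b ∈ A) : A → A → A :=
  fun a b => ⟨mul a b, hA _ a.2 _ b.2⟩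

/-- The bicrossed-product multiplication on `↥A × ↥V` attached to `(⇀, ↼, ⊳, ⊲)`. -/
def subBicrossedMul {k E : Type*} [Field k] [AddCommGroup E] [Module k E]
    (mul : E →ₗ[k] E →ₗ[k] E) (A V : Submodule k E)
    (hA : ∀ a ∈ A, ∀ b ∈ A, mul a b ∈ A) (hV : ∀ a ∈ V, ∀ b ∈ V, mul a b ∈ V)
    (l : A →ₗ[k] V →ₗ[k] V) (r : V →ₗ[k] A →ₗ[k] V)
    (s : V →ₗ[k] A →ₗ[k] A) (t : A →ₗ[k] V →ₗ[k] A) :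
    A × V → A × V → A × V :=
  fun p q =>
    (subMul mul A hA p.1 q.1 + s p.2 q.1 + t p.1 q.2,
     subMul mul V hV p.2 q.2 + l p.1 q.2 + r p.2 q.1)

/-!
If `E = A ⊕ V`, the four actions are the components of the mixed products: `a ⇀ v` and `a ⊲ v`
are the `V`- and `A`-parts of `av`, and `v ↼ a`, `v ⊳ a` those of `va`. Then `(a, v) ↦ a + v` is
a bijective multiplicative map `A ⋈ V → E`, so the perm identities of `E` pull back to `A ⋈ V`.
Conversely, bijectivity of `(a, v) ↦ a + v` is precisely `E = A ⊕ V`.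
-/

def IsPermMul {X : Type*} (mul : X → X → X) : Prop :=
  ∀ x y z, mul (mul x y) z = mul x (mul y z) ∧ mul x (mul y z) = mul x (mul z y)

theorem IsPermMul.of_injective {X Y : Type*} {mulX : X → X → X} {mulY : Y → Y → Y}
    (hY : IsPermMul mulY) {f : X → Y} (hf : Function.Injective f)
    (hmul : ∀ x y, f (mulX x y) = mulY (f x) (f y)) : IsPermMul mulX := fun x y z =>
  ⟨hf <| by simp only [hmul, (hY _ _ _).1], hf <| by simp only [hmul, (hY _ _ _).2]⟩

namespace Submodule

variable {k E : Type*} [CommRing k] [AddCommGroup E] [Module k E]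

theorem isCompl_iff_bijective_add {A V : Submodule k E} :
    IsCompl A V ↔ Function.Bijective fun x : A × V => (x.1 : E) + x.2 := by
  refine ⟨fun hc => (A.prodEquivOfIsCompl V hc).bijective, fun ⟨hinj, hsurj⟩ => ⟨?_, ?_⟩⟩
  · refine disjoint_def.mpr fun x hxA hxV => ?_
    have h : ((⟨x, hxA⟩, -⟨x, hxV⟩) : A × V) = (0, 0) := hinj (by simp)
    simpa using congrArg (fun p : A × V => (p.1 : E)) h
  · refine codisjoint_iff.mpr (eq_top_iff.mpr fun x _ => ?_)
    obtain ⟨⟨a, v⟩, rfl⟩ := hsurj x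
    exact add_mem_sup a.2 v.2

noncomputable def projectedMul (mul : E →ₗ[k] E →ₗ[k] E) {A V : Submodule k E} (hc : IsCompl A V)
    (B C : Submodule k E) : B →ₗ[k] C →ₗ[k] A :=
  (mul.compl₁₂ B.subtype C.subtype).compr₂ (A.projectionOnto V hc)

theorem projectedMul_add_projectedMul (mul : E →ₗ[k] E →ₗ[k] E) {A V : Submodule k E}
    (hc : IsCompl A V) {B C : Submodule k E} (b : B) (c : C) :
    (projectedMul mul hc B C b c : E) + projectedMul mul hc.symm B C b c = mul b c :=
  projection_add_projection_eq_self hc _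

end Submodule

open Submodule

theorem add_subBicrossedMul_projectedMul {k E : Type*} [Field k] [AddCommGroup E] [Module k E]
    (mul : E →ₗ[k] E →ₗ[k] E) {A V : Submodule k E} (hc : IsCompl A V)
    (hA : ∀ a ∈ A, ∀ b ∈ A, mul a b ∈ A) (hV : ∀ a ∈ V, ∀ b ∈ V, mul a b ∈ V) (x y : A × V) :
    let bm := subBicrossedMul mul A V hA hV (projectedMul mul hc.symm A V)
      (projectedMul mul hc.symm V A) (projectedMul mul hc V A) (projectedMul mul hc A V)
    ((bm x y).1 : E) + (bm x y).2 = mul (x.1 + x.2) (y.1 + y.2) := by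
  have hva := projectedMul_add_projectedMul mul hc x.2 y.1
  have hav := projectedMul_add_projectedMul mul hc x.1 y.2
  simp only [subBicrossedMul, subMul, coe_add, map_add, LinearMap.add_apply]
  rw [← hva, ← hav]
  abel

/-- A perm algebra `E` factorizes through two given perm subalgebras `A` and `V`
(that is, `E = A + V` and `A ∩ V = 0`) if and only if there exists a matched pair
structure `(A, V, ⇀, ↼, ⊳, ⊲)` such that `E` is isomorphic to the bicrossed product
`A ⋈ V` via `(a, v) ↦ a + v`. -/
theorem factorization_iff_matched_pair {k E : Type*} [Field k] [AddCommGroup E] [Module k E]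
    (mul : E →ₗ[k] E →ₗ[k] E)
    (hp1 : ∀ x y z, mul (mul x y) z = mul x (mul y z))
    (hp2 : ∀ x y z, mul x (mul y z) = mul x (mul z y))
    (A V : Submodule k E)
    (hA : ∀ a ∈ A, ∀ b ∈ A, mul a b ∈ A)
    (hV : ∀ a ∈ V, ∀ b ∈ V, mul a b ∈ V) :
    (A ⊔ V = ⊤ ∧ A ⊓ V = ⊥)
    ↔
    (∃ (l : A →ₗ[k] V →ₗ[k] V) (r : V →ₗ[k] A →ₗ[k] V)
       (s : V →ₗ[k] A →ₗ[k] A) (t : A →ₗ[k] V →ₗ[k] A),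
      -- matched pair: the bicrossed product is a perm algebra
      (∀ x y z : A × V,
        subBicrossedMul mul A V hA hV l r s t
            (subBicrossedMul mul A V hA hV l r s t x y) z =
          subBicrossedMul mul A V hA hV l r s t x
            (subBicrossedMul mul A V hA hV l r s t y z) ∧
        subBicrossedMul mul A V hA hV l r s t x
            (subBicrossedMul mul A V hA hV l r s t y z) =
          subBicrossedMul mul A V hA hV l r s t x
            (subBicrossedMul mul A V hA hV l r s t z y)) ∧
      -- `(a, v) ↦ a + v` is an isomorphism of perm algebras `A ⋈ V ≅ E`
      (∀ x y : A × V,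
        ((subBicrossedMul mul A V hA hV l r s t x y).1 : E) +
            ((subBicrossedMul mul A V hA hV l r s t x y).2 : E) =
          mul ((x.1 : E) + (x.2 : E)) ((y.1 : E) + (y.2 : E))) ∧
      Function.Bijective (fun x : A × V => ((x.1 : E) + (x.2 : E)))) := by
  rw [← codisjoint_iff, ← disjoint_iff, and_comm, ← isCompl_iff, isCompl_iff_bijective_add]
  refine ⟨fun hbij => ?_, fun ⟨_, _, _, _, _, _, hbij⟩ => hbij⟩
  have hc := isCompl_iff_bijective_add.mpr hbij
  have hmul := add_subBicrossedMul_projectedMul mul hc hA hV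
  exact ⟨_, _, _, _, IsPermMul.of_injective (fun x y z => ⟨hp1 x y z, hp2 x y z⟩) hbij.1 hmul,
    hmul, hbij⟩
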